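/- The family of metrics g(t) = (1/(3 t^{1/3})) (dx + (1/2) y dz - (1/2) z dy)^2 + t^{1/3} (dy^2 + dz^2) on R^3, defined for t > 0, satisfies the Ricci flow equation ∂g/∂t = -2 Ric(g(t)). -/

import Mathlib

/- STATEMENT 1: The family of metrics
g(t) = (1/(3 t^{1/3})) (dx + (1/2) y dz - (1/2) z dy)² + t^{1/3} (dy² + dz²)
on ℝ³ (t > 0) satisfies the Ricci flow equation ∂g/∂t = -2 Ric(g(t)).
Coordinates: x = p 0, y = p 1, z = p 2.  This is the Nil-type expanding soliton. -/

noncomputable section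

/-- Partial derivative in the `i`-th coordinate direction. -/
def pd {n : ℕ} (i : Fin n) (h : (Fin n → ℝ) → ℝ) (x : Fin n → ℝ) : ℝ :=
  fderiv ℝ h x (Pi.single i 1)

/-- Christoffel symbols Γ^k_{ij} of a metric `g` given in coordinates. -/
def christoffel {n : ℕ} (g : (Fin n → ℝ) → Matrix (Fin n) (Fin n) ℝ)
    (x : Fin n → ℝ) (k i j : Fin n) : ℝ :=
  (1 / 2) * ∑ l, (g x)⁻¹ k l *
    (pd i (fun y => g y l j) x + pd j (fun y => g y l i) x - pd l (fun y => g y i j) x)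

/-- The Ricci tensor of a metric `g` in coordinates. -/
def ricci {n : ℕ} (g : (Fin n → ℝ) → Matrix (Fin n) (Fin n) ℝ)
    (x : Fin n → ℝ) (i j : Fin n) : ℝ :=
  (∑ k, pd k (fun y => christoffel g y k i j) x)
    - (∑ k, pd i (fun y => christoffel g y k k j) x)
    + (∑ k, ∑ l, christoffel g x k k l * christoffel g x l i j)
    - (∑ k, ∑ l, christoffel g x k i l * christoffel g x l k j)

/-- The Heisenberg connection 1-form `ω = dx + (1/2) y dz - (1/2) z dy`
written in components. -/
def nilForm (p : Fin 3 → ℝ) : Fin 3 → ℝ := ![1, -(p 2) / 2, (p 1) / 2]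

/-- The Nil-type expanding soliton metric
`(1/(3 t^{1/3})) ω ⊗ ω + t^{1/3} (dy² + dz²)`. -/
def gNilExpander (t : ℝ) (p : Fin 3 → ℝ) : Matrix (Fin 3) (Fin 3) ℝ :=
  Matrix.of fun i j =>
    (1 / (3 * t ^ ((1 : ℝ) / 3))) * nilForm p i * nilForm p j
      + (if i = j ∧ i ≠ 0 then t ^ ((1 : ℝ) / 3) else 0)

/-! The metrics `a ω² + b (dy² + dz²)`, `a, b ≠ 0`, are left-invariant on the Heisenberg
group. If `(E_α)` is the frame dual to the coframe `(ω, dy, dz)` and `D k i = ∂_k ω_i`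
(constant and antisymmetric), their Christoffel symbols are
`Γ^k_ij = (a/b) ∑_α E_α^k (D_iα ω_j + D_jα ω_i)`, and differentiating once more gives
`Ric = (a²/2b²) ω² - (a/2b) (dy² + dz²)`, again a metric of the family. The Ricci flow thus
reduces to the ODE `a' = -a²/b²`, `b' = a/b`, which is solved by `a = 1/(3 t^{1/3})`,
`b = t^{1/3}`. -/

section PartialDerivative

variable {n : ℕ} {f g : (Fin n → ℝ) → ℝ} {x : Fin n → ℝ}

lemma pd_add (hf : DifferentiableAt ℝ f x) (hg : DifferentiableAt ℝ g x) (i : Fin n) :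
    pd i (fun y => f y + g y) x = pd i f x + pd i g x := by
  simp [pd, fderiv_fun_add hf hg]

lemma pd_add_const (c : ℝ) (i : Fin n) : pd i (fun y => f y + c) x = pd i f x := by
  simp [pd, fderiv_add_const]

lemma pd_mul (hf : DifferentiableAt ℝ f x) (hg : DifferentiableAt ℝ g x) (i : Fin n) :
    pd i (fun y => f y * g y) x = pd i f x * g x + f x * pd i g x := by
  simp only [pd, fderiv_fun_mul hf hg, add_apply, smul_apply, smul_eq_mul]
  ring

lemma pd_const_mul (c : ℝ) (i : Fin n) : pd i (fun y => c * f y) x = c * pd i f x := by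
  simp [pd, ← smul_eq_mul, ← Pi.smul_def, fderiv_const_smul_field]

lemma pd_sum {ι : Type*} (s : Finset ι) {F : ι → (Fin n → ℝ) → ℝ}
    (hF : ∀ α ∈ s, DifferentiableAt ℝ (F α) x) (i : Fin n) :
    pd i (fun y => ∑ α ∈ s, F α y) x = ∑ α ∈ s, pd i (F α) x := by
  simp [pd, fderiv_fun_sum hF]

lemma differentiable_const_add_sum_mul (c : ℝ) (v : Fin n → ℝ) :
    Differentiable ℝ fun y : Fin n → ℝ => c + ∑ m, v m * y m := by
  fun_prop

lemma pd_const_add_sum_mul (c : ℝ) (v : Fin n → ℝ) (i : Fin n) :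
    pd i (fun y => c + ∑ m, v m * y m) x = v i := by
  have hlin : HasFDerivAt (fun y : Fin n → ℝ => ∑ m, v m * y m)
      (∑ m, v m • (ContinuousLinearMap.proj m : (Fin n → ℝ) →L[ℝ] ℝ)) x :=
    HasFDerivAt.fun_sum fun m _ =>
      ((ContinuousLinearMap.proj m : (Fin n → ℝ) →L[ℝ] ℝ).hasFDerivAt (x := x)).const_mul
        (v m)
  simp [pd, fderiv_const_add, hlin.fderiv, Pi.single_apply]

end PartialDerivative

namespace Matrix

variable {n K : Type*} [Fintype n] [DecidableEq n]

lemma transpose_mul_diagonal_mul_apply [CommRing K] (A : Matrix n n K) (d : n → K) (i j : n) :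
    (Aᵀ * diagonal d * A) i j = ∑ α, A α i * d α * A α j := by
  simp [mul_apply, diagonal_apply]

theorem inv_transpose_mul_diagonal_mul [Field K] {A B : Matrix n n K} (hAB : A * Bᵀ = 1)
    {d : n → K} (hd : ∀ i, d i ≠ 0) :
    (Aᵀ * diagonal d * A)⁻¹ = Bᵀ * diagonal d⁻¹ * B := by
  have hBA : Aᵀ * B = 1 := by
    simpa using congrArg transpose (mul_eq_one_comm.mp hAB)
  have hdd : diagonal d * diagonal d⁻¹ = 1 := by
    simp [diagonal_mul_diagonal, hd]
  apply inv_eq_right_inv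
  calc Aᵀ * diagonal d * A * (Bᵀ * diagonal d⁻¹ * B)
      = Aᵀ * (diagonal d * (A * Bᵀ) * diagonal d⁻¹) * B := by simp only [Matrix.mul_assoc]
    _ = 1 := by rw [hAB, Matrix.mul_one, hdd, Matrix.mul_one, hBA]

end Matrix

open Matrix

def nilFormDeriv : Matrix (Fin 3) (Fin 3) ℝ := !![0, 0, 0; 0, 0, 1 / 2; 0, -1 / 2, 0]

-- Row `α` of `nilCoframe y` is the `α`-th form of `(ω, dy, dz)`; row `α` of `nilFrame y` is the
-- dual vector field `E_α`.
def nilCoframe (y : Fin 3 → ℝ) : Matrix (Fin 3) (Fin 3) ℝ :=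
  !![1, -(y 2) / 2, y 1 / 2; 0, 1, 0; 0, 0, 1]

def nilFrame (y : Fin 3 → ℝ) : Matrix (Fin 3) (Fin 3) ℝ :=
  !![1, 0, 0; y 2 / 2, 1, 0; -(y 1) / 2, 0, 1]

def nilMetric (a b : ℝ) (y : Fin 3 → ℝ) : Matrix (Fin 3) (Fin 3) ℝ :=
  Matrix.of fun i j => a * nilForm y i * nilForm y j + if i = j ∧ i ≠ 0 then b else 0

def nilChristoffel (a b : ℝ) (x : Fin 3 → ℝ) (k i j : Fin 3) : ℝ :=
  a / b * ∑ α, nilFrame x α k *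
    (nilFormDeriv i α * nilForm x j + nilFormDeriv j α * nilForm x i)

lemma nilFormDeriv_antisymm (i j : Fin 3) : nilFormDeriv i j = -nilFormDeriv j i := by
  fin_cases i <;> fin_cases j <;> norm_num [nilFormDeriv]

lemma nilFormDeriv_apply_zero (i : Fin 3) : nilFormDeriv i 0 = 0 := by
  fin_cases i <;> rfl

lemma nilForm_eq_add_sum (y : Fin 3 → ℝ) (i : Fin 3) :
    nilForm y i = nilForm 0 i + ∑ m, nilFormDeriv m i * y m := by
  fin_cases i <;> simp [nilForm, nilFormDeriv, Fin.sum_univ_three] <;> ring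

lemma nilFrame_eq_add_sum (y : Fin 3 → ℝ) (α k : Fin 3) :
    nilFrame y α k = nilFrame 0 α k + ∑ m, (if k = 0 then -nilFormDeriv m α else 0) * y m := by
  fin_cases α <;> fin_cases k <;> simp [nilFrame, nilFormDeriv, Fin.sum_univ_three] <;> ring

@[fun_prop]
lemma differentiable_nilForm (i : Fin 3) : Differentiable ℝ fun y => nilForm y i := by
  rw [funext fun y => nilForm_eq_add_sum y i]
  exact differentiable_const_add_sum_mul _ _

@[fun_prop]
lemma differentiable_nilFrame (α k : Fin 3) : Differentiable ℝ fun y => nilFrame y α k := by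
  rw [funext fun y => nilFrame_eq_add_sum y α k]
  exact differentiable_const_add_sum_mul _ _

lemma pd_nilForm (k i : Fin 3) (x : Fin 3 → ℝ) :
    pd k (fun y => nilForm y i) x = nilFormDeriv k i := by
  rw [funext fun y => nilForm_eq_add_sum y i, pd_const_add_sum_mul]

lemma pd_nilFrame (m α k : Fin 3) (x : Fin 3 → ℝ) :
    pd m (fun y => nilFrame y α k) x = if k = 0 then -nilFormDeriv m α else 0 := by
  rw [funext fun y => nilFrame_eq_add_sum y α k, pd_const_add_sum_mul]

lemma nilCoframe_mul_transpose_nilFrame (y : Fin 3 → ℝ) :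
    nilCoframe y * (nilFrame y)ᵀ = 1 := by
  ext α β
  fin_cases α <;> fin_cases β <;>
    simp [nilCoframe, nilFrame, mul_apply, Fin.sum_univ_three] <;> ring

lemma sum_nilFrame_mul_nilFormDeriv (x : Fin 3 → ℝ) (α i : Fin 3) :
    ∑ l, nilFrame x α l * nilFormDeriv i l = nilFormDeriv i α := by
  fin_cases α <;> fin_cases i <;> simp [nilFrame, nilFormDeriv, Fin.sum_univ_three]

lemma nilMetric_eq_coframe (a b : ℝ) (y : Fin 3 → ℝ) :
    nilMetric a b y = (nilCoframe y)ᵀ * diagonal ![a, b, b] * nilCoframe y := by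
  ext i j
  rw [transpose_mul_diagonal_mul_apply, Fin.sum_univ_three]
  fin_cases i <;> fin_cases j <;>
    simp [nilMetric, nilForm, nilCoframe, -mul_eq_mul_left_iff, -mul_eq_mul_right_iff] <;> ring

lemma inv_nilMetric {a b : ℝ} (ha : a ≠ 0) (hb : b ≠ 0) (y : Fin 3 → ℝ) :
    (nilMetric a b y)⁻¹ = (nilFrame y)ᵀ * diagonal ![a⁻¹, b⁻¹, b⁻¹] * nilFrame y := by
  rw [nilMetric_eq_coframe, inv_transpose_mul_diagonal_mul (nilCoframe_mul_transpose_nilFrame y)]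
  · congr
    ext α
    fin_cases α <;> rfl
  · intro α
    fin_cases α <;> simpa

lemma pd_nilMetric (a b : ℝ) (k i j : Fin 3) (x : Fin 3 → ℝ) :
    pd k (fun y => nilMetric a b y i j) x
      = a * (nilFormDeriv k i * nilForm x j + nilForm x i * nilFormDeriv k j) := by
  simp only [nilMetric, of_apply, mul_assoc]
  rw [pd_add_const, pd_const_mul, pd_mul (differentiable_nilForm i x) (differentiable_nilForm j x),
    pd_nilForm, pd_nilForm]

lemma christoffel_nilMetric {a b : ℝ} (ha : a ≠ 0) (hb : b ≠ 0) (x : Fin 3 → ℝ)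
    (k i j : Fin 3) :
    christoffel (nilMetric a b) x k i j = nilChristoffel a b x k i j := by
  have first_kind : ∀ l, pd i (fun y => nilMetric a b y l j) x
      + pd j (fun y => nilMetric a b y l i) x - pd l (fun y => nilMetric a b y i j) x
      = 2 * a * (nilFormDeriv i l * nilForm x j + nilFormDeriv j l * nilForm x i) := by
    intro l
    simp only [pd_nilMetric, nilFormDeriv_antisymm l, nilFormDeriv_antisymm i j]
    ring
  have contract : ∀ α, ∑ l, nilFrame x α l *
      (nilFormDeriv i l * nilForm x j + nilFormDeriv j l * nilForm x i)
      = nilFormDeriv i α * nilForm x j + nilFormDeriv j α * nilForm x i := by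
    intro α
    simp only [mul_add, ← mul_assoc, Finset.sum_add_distrib, ← Finset.sum_mul,
      sum_nilFrame_mul_nilFormDeriv]
  calc christoffel (nilMetric a b) x k i j
      = a * ∑ α, nilFrame x α k * ![a⁻¹, b⁻¹, b⁻¹] α * ∑ l, nilFrame x α l *
          (nilFormDeriv i l * nilForm x j + nilFormDeriv j l * nilForm x i) := by
        simp only [christoffel, first_kind, inv_nilMetric ha hb, transpose_mul_diagonal_mul_apply,
          Finset.sum_mul, Finset.mul_sum]
        rw [Finset.sum_comm]
        refine Finset.sum_congr rfl fun α _ => Finset.sum_congr rfl fun l _ => ?_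
        ring
    -- the `α = 0` term, the only one carrying `a⁻¹`, vanishes because `∂_i ω_0 = 0`
    _ = nilChristoffel a b x k i j := by
        simp only [contract, nilChristoffel, Fin.sum_univ_three, nilFormDeriv_apply_zero,
          cons_val_zero, cons_val_one, cons_val, zero_mul, mul_zero, add_zero, zero_add]
        field_simp

lemma pd_nilChristoffel (a b : ℝ) (m k i j : Fin 3) (x : Fin 3 → ℝ) :
    pd m (fun y => nilChristoffel a b y k i j) x
      = a / b * ∑ α, ((if k = 0 then -nilFormDeriv m α else 0)
          * (nilFormDeriv i α * nilForm x j + nilFormDeriv j α * nilForm x i)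
        + nilFrame x α k
          * (nilFormDeriv i α * nilFormDeriv m j + nilFormDeriv j α * nilFormDeriv m i)) := by
  unfold nilChristoffel
  rw [pd_const_mul, pd_sum _ fun α _ => by fun_prop]
  congr 1
  refine Finset.sum_congr rfl fun α _ => ?_
  rw [pd_mul (by fun_prop) (by fun_prop), pd_add (by fun_prop) (by fun_prop), pd_const_mul,
    pd_const_mul, pd_nilFrame, pd_nilForm, pd_nilForm]

lemma ricci_nilMetric {a b : ℝ} (ha : a ≠ 0) (hb : b ≠ 0) (x : Fin 3 → ℝ) (i j : Fin 3) :
    ricci (nilMetric a b) x i j = nilMetric (a ^ 2 / (2 * b ^ 2)) (-(a / (2 * b))) x i j := by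
  simp only [ricci, christoffel_nilMetric ha hb, pd_nilChristoffel]
  fin_cases i <;> fin_cases j <;>
    simp [nilChristoffel, nilMetric, nilFrame, nilForm, nilFormDeriv, Fin.sum_univ_three] <;>
    field_simp <;> ring

lemma const_mul_nilMetric (c a b : ℝ) (y : Fin 3 → ℝ) (i j : Fin 3) :
    c * nilMetric a b y i j = nilMetric (c * a) (c * b) y i j := by
  simp only [nilMetric, of_apply]
  split_ifs <;> ring

lemma hasDerivAt_nilMetric {a b : ℝ → ℝ} {a' b' t : ℝ} (ha : HasDerivAt a a' t)
    (hb : HasDerivAt b b' t) (y : Fin 3 → ℝ) (i j : Fin 3) :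
    HasDerivAt (fun s => nilMetric (a s) (b s) y i j) (nilMetric a' b' y i j) t := by
  simp only [nilMetric, of_apply]
  split_ifs
  · exact ((ha.mul_const _).mul_const _).add hb
  · simpa only [add_zero] using (ha.mul_const _).mul_const _

lemma nilMetric_ricci_flow {a b : ℝ → ℝ} {t : ℝ} (hat : a t ≠ 0) (hbt : b t ≠ 0)
    (ha : HasDerivAt a (-(a t ^ 2 / b t ^ 2)) t) (hb : HasDerivAt b (a t / b t) t)
    (y : Fin 3 → ℝ) (i j : Fin 3) :
    HasDerivAt (fun s => nilMetric (a s) (b s) y i j)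
      (-2 * ricci (nilMetric (a t) (b t)) y i j) t := by
  convert hasDerivAt_nilMetric ha hb y i j using 1
  rw [ricci_nilMetric hat hbt, const_mul_nilMetric]
  congr 1 <;> field_simp

lemma hasDerivAt_rpow_one_third {t : ℝ} (ht : 0 < t) :
    HasDerivAt (fun s => s ^ ((1 : ℝ) / 3)) (1 / (3 * (t ^ ((1 : ℝ) / 3)) ^ 2)) t := by
  have hcube : (t ^ ((1 : ℝ) / 3)) ^ 3 = t := by
    rw [← Real.rpow_natCast, ← Real.rpow_mul ht.le]
    norm_num
  convert Real.hasDerivAt_rpow_const (p := 1 / 3) (Or.inl ht.ne') using 1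
  rw [Real.rpow_sub_one ht.ne']
  set u := t ^ ((1 : ℝ) / 3)
  rw [← hcube]
  field_simp

/-- The Nil-type expanding soliton satisfies the Ricci flow equation
`∂g/∂t = -2 Ric(g(t))` for all `t > 0`. -/
theorem nil_expander_is_ricci_flow :
    ∀ t : ℝ, 0 < t → ∀ (p : Fin 3 → ℝ) (i j : Fin 3),
      HasDerivAt (fun s => gNilExpander s p i j)
        (-2 * ricci (gNilExpander t) p i j) t := by
  intro t ht p i j
  have hu : 0 < t ^ ((1 : ℝ) / 3) := by positivity
  have hb := hasDerivAt_rpow_one_third ht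
  refine nilMetric_ricci_flow (a := fun s => 1 / (3 * s ^ ((1 : ℝ) / 3)))
    (b := fun s => s ^ ((1 : ℝ) / 3)) (by positivity) hu.ne' ?_ (hb.congr_deriv ?_) p i j
  · refine ((hasDerivAt_const t (1 : ℝ)).div (hb.const_mul 3) (by positivity)).congr_deriv ?_
    field_simp
    ring
  · field_simp

end
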